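/- arXiv:1409.7033 — 2 statements merged into one kernel-verified Lean document; each statement's English description precedes it below -/
import Mathlib

section
/- Let D=(V,A) be the improved digraph (with loose arcs added) whose associated undirected graph F is a forest. Then the weight function c is nearly conservative on D if and only if D contains no special-simple closed walk of negative total weight. -/
namespace NearlyConservativePaper

variable {V : Type} [Fintype V] [DecidableEq V]

/-- A weighted digraph given by adjacency and arc weights. -/
structure WDigraph (V : Type) where
  Adj : V → V → Prop
  c : V → V → ℝ

/-- A step `(u, v, b)` of a walk: `b = false` means an original arc from `u` to `v`,
`b = true` means the added loose arc from `u` to `v`. -/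
abbrev Step (V : Type) := V × V × Bool

/-- `IsWalk AS s t l`: `l` is a walk from `s` to `t` using arcs allowed by `AS`. -/
def IsWalk (AS : V → V → Bool → Prop) : V → V → List (Step V) → Prop
  | s, t, [] => s = t
  | s, t, (u, v, b) :: l => u = s ∧ AS u v b ∧ IsWalk AS v t l

/-- The list of head-vertices of the steps of a walk. -/
def heads (l : List (Step V)) : List V := l.map fun a => a.2.1

/-- Total weight of a walk with respect to the step-weight `w`. -/
def wSum (w : V → V → Bool → ℝ) (l : List (Step V)) : ℝ :=
  (l.map fun a => w a.1 a.2.1 a.2.2).sum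

/-- A directed cycle: a nonempty closed walk whose vertices are pairwise distinct. -/
def IsCycle (AS : V → V → Bool → Prop) (s : V) (l : List (Step V)) : Prop :=
  IsWalk AS s s l ∧ l ≠ [] ∧ (heads l).Nodup

/-- A directed (simple) path. -/
def IsPath (AS : V → V → Bool → Prop) (s t : V) (l : List (Step V)) : Prop :=
  IsWalk AS s t l ∧ (s :: heads l).Nodup

/-- Nearly conservative: every negative directed cycle consists of exactly two arcs. -/
def NearlyCons (AS : V → V → Bool → Prop) (w : V → V → Bool → ℝ) : Prop :=
  ∀ s l, IsCycle AS s l → wSum w l < 0 → l.length = 2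

/-- Minimum weight of a directed path from `s` to `t`, `+∞` if there is none. -/
noncomputable def distW (AS : V → V → Bool → Prop) (w : V → V → Bool → ℝ)
    (s t : V) : EReal :=
  sInf {x : EReal | ∃ l, IsPath AS s t l ∧ (wSum w l : EReal) = x}

namespace WDigraph

variable (D : WDigraph V)

/-- The arc `uv` is special if `vu` is also an arc and `c(uv) + c(vu) < 0`. -/
def Special (u v : V) : Prop := D.Adj u v ∧ D.Adj v u ∧ D.c u v + D.c v u < 0

/-- The arcs of the original digraph `D` (only `b = false` steps). -/
def baseArcs (u v : V) (b : Bool) : Prop := b = false ∧ D.Adj u v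

/-- The arcs of the improved digraph: original arcs and, for every special arc `vu`,
an added loose ordinary arc from `u` to `v`. -/
def ImpArc (u v : V) (b : Bool) : Prop := if b then D.Special v u else D.Adj u v

/-- The weight of a step of the improved digraph: the loose arc added for the
special arc `vu` has weight `-c(vu)`. -/
def impW (u v : V) (b : Bool) : ℝ := if b then -(D.c v u) else D.c u v

/-- A walk is special-simple if it contains every special arc at most once and never
contains both a special arc and its opposite. -/
def SpecialSimple (l : List (Step V)) : Prop :=
  ∀ u v, D.Special u v → l.count (u, v, false) + l.count (v, u, false) ≤ 1

/-- The associated undirected graph `F`. -/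
def F : SimpleGraph V where
  Adj u v := u ≠ v ∧ D.Special u v
  symm := by
    constructor
    rintro u v ⟨hne, h1, h2, h3⟩
    exact ⟨hne.symm, h2, h1, by linarith⟩
  loopless := by constructor; rintro u ⟨hne, -⟩; exact hne rfl

/-- The weight of a walk of `F`, each edge being traversed as the special arc pointing
in the direction of the traversal. -/
def fWeight {s t : V} (p : D.F.Walk s t) : ℝ :=
  (p.darts.map fun d => D.c d.toProd.1 d.toProd.2).sum

/-- The improved digraph with the original (special) arcs in `Rem` removed. -/
def arcsMinus (Rem : V → V → Prop) (u v : V) (b : Bool) : Prop :=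
  D.ImpArc u v b ∧ ¬ (b = false ∧ Rem u v)

end WDigraph

/-- The special arcs of the negative tree containing `t₀` (to be removed from `D`). -/
def remT (D : WDigraph V) (t₀ : V) : V → V → Prop :=
  fun x y => D.F.Adj x y ∧ D.F.Reachable t₀ x

/- ## Auxiliary lemmas -/

theorem heads_append (l1 l2 : List (Step V)) :
    heads (l1 ++ l2) = heads l1 ++ heads l2 := List.map_append

theorem wSum_append (w : V → V → Bool → ℝ) (l1 l2 : List (Step V)) :
    wSum w (l1 ++ l2) = wSum w l1 + wSum w l2 := by
  simp [wSum]

theorem isWalk_append {AS : V → V → Bool → Prop} :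
    ∀ {l1 l2 : List (Step V)} {s t : V},
      IsWalk AS s t (l1 ++ l2) ↔ ∃ m, IsWalk AS s m l1 ∧ IsWalk AS m t l2
  | [], l2, s, t => by
    constructor
    · intro h; exact ⟨s, rfl, h⟩
    · rintro ⟨m, hm, h⟩; cases hm; exact h
  | (u, v, b) :: l1, l2, s, t => by
    constructor
    · rintro ⟨h1, h2, h3⟩
      obtain ⟨m, hm1, hm2⟩ := isWalk_append.1 h3
      exact ⟨m, ⟨h1, h2, hm1⟩, hm2⟩
    · rintro ⟨m, ⟨h1, h2, h3⟩, h4⟩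
      exact ⟨h1, h2, isWalk_append.2 ⟨m, h3, h4⟩⟩

theorem isWalk_end_mem {AS : V → V → Bool → Prop} :
    ∀ {l : List (Step V)} {s t : V}, IsWalk AS s t l → l ≠ [] → t ∈ heads l
  | [], _, _, _, h => absurd rfl h
  | (u, v, b) :: l, s, t, hw, _ => by
    obtain ⟨-, -, hw⟩ := hw
    rcases eq_or_ne l [] with rfl | hne
    · cases hw; simp [heads]
    · have := isWalk_end_mem hw hne
      simp only [heads, List.map_cons, List.mem_cons]
      right; exact this

theorem count_le_count_heads (x : Step V) (l : List (Step V)) :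
    l.count x ≤ (heads l).count x.2.1 := by
  induction l with
  | nil => simp [heads]
  | cons a t ih =>
    simp only [heads, List.map_cons, List.count_cons] at *
    by_cases h : a = x
    · subst h; simp; omega
    · by_cases h2 : a.2.1 = x.2.1 <;> simp [h, h2] <;> omega

theorem exists_dup_split {α β : Type*} (f : α → β) :
    ∀ l : List α, ¬ (l.map f).Nodup →
      ∃ a b l1 l2 l3, l = l1 ++ (a :: (l2 ++ b :: l3)) ∧ f a = f b := by
  intro l
  induction l with
  | nil => intro h; exact absurd List.nodup_nil h
  | cons c t ih =>
    intro h
    rw [List.map_cons, List.nodup_cons] at h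
    push_neg at h
    by_cases hc : f c ∈ t.map f
    · obtain ⟨b, hb, hfb⟩ := List.mem_map.1 hc
      obtain ⟨l2, l3, rfl⟩ := List.append_of_mem hb
      exact ⟨c, b, [], l2, l3, by simp, hfb.symm⟩
    · obtain ⟨a, b, l1, l2, l3, hsplit, hab⟩ := ih (h hc)
      exact ⟨a, b, c :: l1, l2, l3, by simp [hsplit], hab⟩

/-- In a directed cycle that uses a step `(u,v,false)` and later the step `(v,u,false)`,
the cycle has exactly two arcs. -/
theorem length_two_aux {AS : V → V → Bool → Prop} {u v : V} (huv : u ≠ v)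
    {s : V} {p q : List (Step V)}
    (hw : IsWalk AS s s (p ++ (u, v, false) :: q))
    (hnd : (heads (p ++ (u, v, false) :: q)).Nodup)
    (hmem : (v, u, false) ∈ q) :
    (p ++ (u, v, false) :: q).length = 2 := by
  obtain ⟨q1, q2, rfl⟩ := List.append_of_mem hmem
  obtain ⟨m, hwp, hw2⟩ := isWalk_append.1 hw
  obtain ⟨hum, -, hw3⟩ := hw2
  subst hum
  obtain ⟨m2, hwq1, hw4⟩ := isWalk_append.1 hw3
  obtain ⟨hvm2, -, hwq2⟩ := hw4
  subst hvm2
  -- heads structure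
  have hheads : heads (p ++ (u, v, false) :: (q1 ++ (v, u, false) :: q2)) =
      heads p ++ v :: (heads q1 ++ u :: heads q2) := by
    simp [heads]
  rw [hheads] at hnd
  have hnd2 := hnd.of_append_right
  rw [List.nodup_cons] at hnd2
  -- q1 = []
  have hq1 : q1 = [] := by
    by_contra hne
    exact hnd2.1 (List.mem_append.2 (Or.inl (isWalk_end_mem hwq1 hne)))
  subst hq1
  cases hwq1
  -- p = []
  have hp : p = [] := by
    by_contra hne
    have hu : u ∈ heads p := isWalk_end_mem hwp hne
    have hdisj := (List.nodup_append.1 hnd).2.2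
    exact hdisj u hu u (by simp) rfl
  subst hp
  have hsu : s = u := hwp
  subst hsu
  -- q2 = []
  have hq2 : q2 = [] := by
    by_contra hne
    have hu : s ∈ heads q2 := isWalk_end_mem hwq2 hne
    have h3 := hnd2.2
    simp only [heads, List.map_nil, List.nil_append, List.nodup_cons] at h3
    exact h3.1 hu
  subst hq2
  rfl

theorem length_two_of_both {AS : V → V → Bool → Prop} {u v : V} (huv : u ≠ v)
    {s : V} {l : List (Step V)}
    (hw : IsWalk AS s s l) (hnd : (heads l).Nodup)
    (h1 : (u, v, false) ∈ l) (h2 : (v, u, false) ∈ l) :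
    l.length = 2 := by
  obtain ⟨p, q, rfl⟩ := List.append_of_mem h1
  rcases List.mem_append.1 h2 with hp | hq
  · -- (v,u,false) in p ; reassociate and use the aux lemma with u,v swapped
    obtain ⟨p1, p2, rfl⟩ := List.append_of_mem hp
    have hassoc : (p1 ++ (v, u, false) :: p2) ++ (u, v, false) :: q =
        p1 ++ (v, u, false) :: (p2 ++ (u, v, false) :: q) := by simp
    rw [hassoc] at hw hnd ⊢
    exact length_two_aux huv.symm hw hnd (by simp)
  · rcases List.mem_cons.1 hq with heq | hq'
    · exact absurd (congrArg Prod.fst heq) (Ne.symm huv)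
    · exact length_two_aux huv hw hnd hq'

/-- Any directed cycle of length other than 2 is special-simple. -/
theorem specialSimple_of_cycle (D : WDigraph V) (hloop : ∀ v, ¬ D.Adj v v)
    {s : V} {l : List (Step V)} (hw : IsWalk D.ImpArc s s l)
    (hnd : (heads l).Nodup) (hlen : l.length ≠ 2) :
    D.SpecialSimple l := by
  intro u v hspec
  have huv : u ≠ v := by
    rintro rfl; exact hloop u hspec.1
  have hc1 : l.count (u, v, false) ≤ 1 := by
    have := count_le_count_heads (u, v, false) l
    have h2 := List.nodup_iff_count_le_one.1 hnd v
    simpa using this.trans h2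
  have hc2 : l.count (v, u, false) ≤ 1 := by
    have := count_le_count_heads (v, u, false) l
    have h2 := List.nodup_iff_count_le_one.1 hnd u
    simpa using this.trans h2
  by_contra hgt
  push_neg at hgt
  have hm1 : (u, v, false) ∈ l := by
    rw [← List.count_pos_iff]; omega
  have hm2 : (v, u, false) ∈ l := by
    rw [← List.count_pos_iff]; omega
  exact hlen (length_two_of_both huv hw hnd hm1 hm2)

/-- A negative closed two-step walk contradicts special-simplicity. -/
theorem two_step_contra (D : WDigraph V) {x y : V} {b1 b2 : Bool}
    (harc1 : D.ImpArc x y b1) (harc2 : D.ImpArc y x b2) (hxy : y ≠ x)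
    (hss' : D.SpecialSimple [(x, y, b1), (y, x, b2)])
    (hwsum : D.impW x y b1 + D.impW y x b2 < 0) : False := by
  cases b1 <;> cases b2 <;>
    simp only [WDigraph.ImpArc, WDigraph.impW, Bool.false_eq_true,
      if_true, if_false, ite_true, ite_false] at harc1 harc2 hwsum
  · -- both ordinary: special pair, contradicting special-simplicity
    have hspec : D.Special x y := ⟨harc1, harc2, hwsum⟩
    have h := hss' x y hspec
    have hne : ((x : V), y, false) ≠ ((y : V), x, false) := by
      intro hcontra
      exact hxy (congrArg Prod.fst hcontra).symm
    simp [List.count_cons, hne, Ne.symm hne] at h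
  · obtain ⟨-, -, -⟩ := harc2
    linarith
  · obtain ⟨-, -, -⟩ := harc1
    linarith
  · obtain ⟨-, -, hneg'⟩ := harc2
    linarith

/-- Key lemma: if `c` is nearly conservative, every special-simple closed walk has
nonnegative weight. -/
theorem nonneg_of_specialSimple (D : WDigraph V)
    (hNC : NearlyCons D.ImpArc D.impW) :
    ∀ (n : ℕ) (l : List (Step V)) (s : V), l.length ≤ n →
      IsWalk D.ImpArc s s l → D.SpecialSimple l → 0 ≤ wSum D.impW l := by
  intro n
  induction n with
  | zero =>
    intro l s hlen _ _
    rw [List.length_eq_zero_iff.1 (Nat.le_zero.1 hlen)]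
    simp [wSum]
  | succ n ih =>
    intro l s hlen hw hss
    rcases eq_or_ne l [] with rfl | hne
    · simp [wSum]
    by_cases hnd : (heads l).Nodup
    · -- l is a cycle
      by_contra hneg
      push_neg at hneg
      have hlen2 := hNC s l ⟨hw, hne, hnd⟩ hneg
      -- l has exactly two steps
      obtain ⟨a, b, rfl⟩ : ∃ a b : Step V, l = [a, b] := by
        rcases l with _ | ⟨a, _ | ⟨b, _ | ⟨c, t⟩⟩⟩
        · simp at hlen2
        · simp at hlen2
        · exact ⟨a, b, rfl⟩
        · simp at hlen2
      obtain ⟨u1, v1, b1⟩ := a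
      obtain ⟨u2, v2, b2⟩ := b
      obtain ⟨hu1, harc1, hu2, harc2, hv2⟩ := hw
      rw [hu2, hv2, ← hu1] at harc2 hss
      have hvs : v1 ≠ u1 := by
        simp only [heads, List.map_cons, List.map_nil, List.nodup_cons,
          List.mem_cons] at hnd
        push_neg at hnd
        rw [hv2, ← hu1] at hnd
        exact hnd.1.1
      have hwsum : D.impW u1 v1 b1 + D.impW v1 u1 b2 < 0 := by
        rw [hu2, hv2, ← hu1] at hneg
        simpa [wSum] using hneg
      exact two_step_contra D harc1 harc2 hvs (hss' := hss) hwsum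
    · -- heads have a duplicate: split the closed walk into two shorter closed walks
      obtain ⟨a, b, l1, l2, l3, rfl, hab⟩ :=
        exists_dup_split (fun x : Step V => x.2.1) l hnd
      obtain ⟨a1, v, ab⟩ := a
      obtain ⟨b1, v', bb⟩ := b
      cases (show v = v' from hab)
      obtain ⟨m1, hwl1, hw2⟩ := (isWalk_append (l1 := l1)).1 hw
      obtain ⟨ha1, harca, hw3⟩ := hw2
      subst ha1
      obtain ⟨m2, hwl2, hw4⟩ := (isWalk_append (l1 := l2)).1 hw3
      obtain ⟨hb1, harcb, hwl3⟩ := hw4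
      subst hb1
      -- piece1 : closed walk at v ; piece2 : closed walk at s
      have hwp1 : IsWalk D.ImpArc v v (l2 ++ [(b1, v, bb)]) :=
        isWalk_append.2 ⟨b1, hwl2, rfl, harcb, rfl⟩
      have hwp2 : IsWalk D.ImpArc s s (l1 ++ (a1, v, ab) :: l3) :=
        isWalk_append.2 ⟨a1, hwl1, rfl, harca, hwl3⟩
      have hlentot : l1.length + (l2.length + (l3.length + 1) + 1) ≤ n + 1 := by
        simpa using hlen
      have hsplitcount : ∀ x : Step V,
          (l2 ++ [(b1, v, bb)]).count x + (l1 ++ (a1, v, ab) :: l3).count x =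
          (l1 ++ (a1, v, ab) :: (l2 ++ (b1, v, bb) :: l3)).count x := by
        intro x
        simp [List.count_append, List.count_cons]
        split_ifs <;> omega
      have hss1 : D.SpecialSimple (l2 ++ [(b1, v, bb)]) := by
        intro x y hxy
        have h := hss x y hxy
        have h1 := hsplitcount (x, y, false)
        have h2 := hsplitcount (y, x, false)
        omega
      have hss2 : D.SpecialSimple (l1 ++ (a1, v, ab) :: l3) := by
        intro x y hxy
        have h := hss x y hxy
        have h1 := hsplitcount (x, y, false)
        have h2 := hsplitcount (y, x, false)
        omega
      have hle1 : (l2 ++ [(b1, v, bb)]).length ≤ n := by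
        simp only [List.length_append, List.length_cons, List.length_nil]
        omega
      have hle2 : (l1 ++ (a1, v, ab) :: l3).length ≤ n := by
        simp only [List.length_append, List.length_cons]
        omega
      have h1 := ih _ _ hle1 hwp1 hss1
      have h2 := ih _ _ hle2 hwp2 hss2
      have hsum : wSum D.impW (l1 ++ (a1, v, ab) :: (l2 ++ (b1, v, bb) :: l3)) =
          wSum D.impW (l2 ++ [(b1, v, bb)]) + wSum D.impW (l1 ++ (a1, v, ab) :: l3) := by
        simp [wSum]
        ring
      rw [hsum]
      linarith

/-- Let `D` be the improved digraph (with loose arcs added) whose associated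
undirected graph `F` is a forest. Then `c` is nearly conservative on `D` if and only if
`D` contains no special-simple closed walk of negative total weight. -/
theorem statement_0 {V : Type} [Fintype V] [DecidableEq V] (D : WDigraph V)
    (hloop : ∀ v, ¬ D.Adj v v) (hforest : D.F.IsAcyclic) :
    NearlyCons D.ImpArc D.impW ↔
      ¬ ∃ (s : V) (l : List (Step V)),
          IsWalk D.ImpArc s s l ∧ D.SpecialSimple l ∧ wSum D.impW l < 0 := by
  constructor
  · rintro hNC ⟨s, l, hw, hss, hneg⟩
    have := nonneg_of_specialSimple D hNC l.length l s le_rfl hw hss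
    linarith
  · intro hno s l hcyc hneg
    by_contra hlen
    exact hno ⟨s, l, hcyc.1,
      specialSimple_of_cycle D hloop hcyc.1 hcyc.2.2 hlen, hneg⟩

end NearlyConservativePaper
end

section
/- Let D=(V,A) be a digraph with arc-weight function c, and let F=(V,E) be the associated undirected graph whose edges are the pairs {u,v} with u ≠ v such that both uv and vu are arcs of D and c(uv)+c(vu) < 0. If F contains a cycle, then c is not nearly conservative on D, i.e., D contains a negative directed cycle with at least three arcs. -/
namespace NearlyConservativePaper

variable {V : Type} [Fintype V] [DecidableEq V]

lemma sum_nonpos_aux : ∀ L : List ℝ, (∀ x ∈ L, x ≤ 0) → L.sum ≤ 0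
  | [], _ => by simp
  | a :: t, h => by
    have := sum_nonpos_aux t (fun x hx => h x (by simp [hx]))
    have := h a (by simp)
    simp only [List.sum_cons]
    linarith

lemma sum_neg_of_forall_neg {L : List ℝ} (hne : L ≠ []) (h : ∀ x ∈ L, x < 0) :
    L.sum < 0 := by
  cases L with
  | nil => simp at hne
  | cons a t =>
    have ha := h a (by simp)
    have ht : t.sum ≤ 0 := sum_nonpos_aux t (fun x hx => (h x (by simp [hx])).le)
    simp only [List.sum_cons]
    linarith

/-- The list of steps associated to a walk of `F`. -/
def toSteps {D : WDigraph V} {s t : V} (p : D.F.Walk s t) : List (Step V) :=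
  p.darts.map fun d => (d.toProd.1, d.toProd.2, false)

lemma toSteps_isWalk (D : WDigraph V) {s t : V} (p : D.F.Walk s t) :
    IsWalk D.baseArcs s t (toSteps p) := by
  induction p with
  | nil => simp [IsWalk, toSteps]
  | cons h q ih =>
    simp only [toSteps, SimpleGraph.Walk.darts_cons, List.map_cons] at *
    exact ⟨rfl, ⟨rfl, h.2.1⟩, ih⟩

lemma heads_toSteps {D : WDigraph V} {s t : V} (p : D.F.Walk s t) :
    heads (toSteps p) = p.support.tail := by
  simp only [heads, toSteps, List.map_map]
  exact p.map_snd_darts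

lemma wSum_toSteps {D : WDigraph V} {s t : V} (p : D.F.Walk s t) :
    wSum D.impW (toSteps p) = (p.darts.map fun d => D.c d.toProd.1 d.toProd.2).sum := by
  simp [wSum, toSteps, List.map_map, WDigraph.impW, Function.comp_def]

lemma length_toSteps {D : WDigraph V} {s t : V} (p : D.F.Walk s t) :
    (toSteps p).length = p.length := by
  simp [toSteps]

lemma toSteps_isCycle {D : WDigraph V} {v : V} {p : D.F.Walk v v} (hp : p.IsCycle) :
    IsCycle D.baseArcs v (toSteps p) := by
  refine ⟨toSteps_isWalk D p, ?_, ?_⟩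
  · have h3 := hp.three_le_length
    have : (toSteps p).length ≠ 0 := by rw [length_toSteps]; omega
    exact fun h => this (by simp [h])
  · rw [heads_toSteps]; exact hp.support_nodup

lemma isCycle_reverse {G : SimpleGraph V} {v : V} {p : G.Walk v v} (hp : p.IsCycle) :
    p.reverse.IsCycle := by
  refine ⟨⟨SimpleGraph.Walk.IsTrail.reverse p hp.isTrail, fun h => hp.ne_nil (by simpa using congrArg SimpleGraph.Walk.reverse h)⟩, ?_⟩
  have hT : p.support.tail.Nodup := hp.support_nodup
  have hTne : p.support.tail ≠ [] := by
    have := hp.three_le_length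
    have hl := p.length_support
    intro h
    have : p.support.length ≤ 1 := by
      cases hs : p.support with
      | nil => simp [hs]
      | cons a t => rw [hs] at h; simp at h; simp [hs, h]
    omega
  have hlast : p.support.tail.getLast hTne = v := by
    rw [List.getLast_tail, p.getLast_support]
  have hdrop : p.support.tail.dropLast ++ [v] = p.support.tail := by
    conv_rhs => rw [← List.dropLast_append_getLast hTne, hlast]
  have hrev : p.reverse.support = v :: (p.support.tail.dropLast.reverse ++ [v]) := by
    rw [SimpleGraph.Walk.support_reverse]
    conv_lhs => rw [p.support_eq_cons, ← hdrop]
    simp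
  rw [hrev]
  simp only [List.tail_cons]
  rw [← List.nodup_reverse]
  simp only [List.reverse_append, List.reverse_reverse, List.reverse_cons, List.reverse_nil,
    List.nil_append, List.singleton_append]
  rw [← hdrop] at hT
  have := List.nodup_append'.mp hT
  refine List.nodup_cons.mpr ⟨?_, this.1⟩
  intro hv
  exact this.2.2 hv (by simp)

/-- If the associated undirected graph `F` of `D` contains a cycle, then `c`
is not nearly conservative on `D`, i.e. `D` contains a negative directed cycle with at
least three arcs. -/
theorem statement_6 {V : Type} [Fintype V] [DecidableEq V] (D : WDigraph V)
    (hloop : ∀ v, ¬ D.Adj v v) (hcyc : ¬ D.F.IsAcyclic) :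
    ¬ NearlyCons D.baseArcs D.impW ∧
      ∃ (s : V) (l : List (Step V)),
        IsCycle D.baseArcs s l ∧ wSum D.impW l < 0 ∧ 3 ≤ l.length := by
  simp only [SimpleGraph.IsAcyclic, not_forall, not_not] at hcyc
  obtain ⟨v, p, hp⟩ := hcyc
  have key : ∃ (s : V) (l : List (Step V)),
      IsCycle D.baseArcs s l ∧ wSum D.impW l < 0 ∧ 3 ≤ l.length := by
    have h3 := hp.three_le_length
    have hdne : p.darts ≠ [] := by
      intro h
      have := p.length_darts
      rw [h] at this
      simp at this
      omega
    -- total of the two traversals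
    have hsum : wSum D.impW (toSteps p) + wSum D.impW (toSteps p.reverse) < 0 := by
      rw [wSum_toSteps, wSum_toSteps, SimpleGraph.Walk.darts_reverse,
        List.map_reverse, List.sum_reverse, List.map_map, ← List.sum_map_add]
      apply sum_neg_of_forall_neg
      · simpa using hdne
      · intro x hx
        simp only [List.mem_map] at hx
        obtain ⟨d, hd, rfl⟩ := hx
        have hadj : D.F.Adj d.toProd.1 d.toProd.2 := d.adj
        have hsp := hadj.2
        simp only [Function.comp, SimpleGraph.Dart.symm_toProd, Prod.fst_swap, Prod.snd_swap]
        linarith [hsp.2.2]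
    by_cases h0 : wSum D.impW (toSteps p) < 0
    · exact ⟨v, toSteps p, toSteps_isCycle hp, h0, by rw [length_toSteps]; omega⟩
    · refine ⟨v, toSteps p.reverse, toSteps_isCycle (isCycle_reverse hp), by linarith, ?_⟩
      rw [length_toSteps, SimpleGraph.Walk.length_reverse]; omega
  refine ⟨?_, key⟩
  intro hnc
  obtain ⟨s, l, hc, hw, hl⟩ := key
  have := hnc s l hc hw
  omega

end NearlyConservativePaper
end
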